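/- arXiv:2004.10983 — 3 statements merged into one kernel-verified Lean document; each statement's English description precedes it below -/
import Mathlib

section
/- Equational logic is complete: if a Σ-equation t ≈_n s holds in every model of a presentation ⟨Σ, E⟩, then t ≈_n s is derivable from E in equational logic. -/
universe u v

/-- Σ-terms in `n` variables over a graded set (signature) `Sig`. -/
inductive Term (Sig : ℕ → Type u) : ℕ → Type u
  | var {n : ℕ} (i : Fin n) : Term Sig n
  | op {n k : ℕ} (σ : Sig k) (ts : Fin k → Term Sig n) : Term Sig n

/-- Simultaneous substitution. -/
def Term.subst {Sig : ℕ → Type u} {k n : ℕ} : Term Sig k → (Fin k → Term Sig n) → Term Sig n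
  | .var i, θ => θ i
  | .op σ ts, θ => .op σ (fun j => (ts j).subst θ)

@[simp] theorem Term.subst_op {Sig : ℕ → Type u} {k n m : ℕ} (σ : Sig m)
    (ts : Fin m → Term Sig k) (θ : Fin k → Term Sig n) :
    (Term.op σ ts).subst θ = Term.op σ (fun j => (ts j).subst θ) := rfl

@[simp] theorem Term.subst_var' {Sig : ℕ → Type u} {k n : ℕ} (i : Fin k)
    (θ : Fin k → Term Sig n) : (Term.var i).subst θ = θ i := rfl

theorem Term.subst_var {Sig : ℕ → Type u} {n : ℕ} (t : Term Sig n) :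
    t.subst (fun i => Term.var i) = t := by
  induction t with
  | var i => rfl
  | op σ ts ih => simp only [Term.subst_op, ih]

theorem Term.subst_assoc {Sig : ℕ → Type u} {l k n : ℕ} (u : Term Sig l)
    (s : Fin l → Term Sig k) (t : Fin k → Term Sig n) :
    (u.subst s).subst t = u.subst (fun j => (s j).subst t) := by
  induction u with
  | var i => rfl
  | op σ ts ih => simp only [Term.subst_op, ih]

/-- Interpretation of terms in a Σ-algebra. -/
def interp {Sig : ℕ → Type u} {A : Type v} (ops : ∀ k, Sig k → (Fin k → A) → A) {n : ℕ} :
    Term Sig n → (Fin n → A) → A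
  | .var i, a => a i
  | .op σ ts, a => ops _ σ (fun j => interp ops (ts j) a)

/-- Derivability in equational logic. -/
inductive Deriv (Sig : ℕ → Type u) (E : ∀ n, Term Sig n → Term Sig n → Prop) :
    ∀ n, Term Sig n → Term Sig n → Prop
  | ax {n : ℕ} {t s : Term Sig n} : E n t s → Deriv Sig E n t s
  | refl {n : ℕ} (t : Term Sig n) : Deriv Sig E n t t
  | symm {n : ℕ} {t s : Term Sig n} : Deriv Sig E n t s → Deriv Sig E n s t
  | trans {n : ℕ} {t s u : Term Sig n} :
      Deriv Sig E n t s → Deriv Sig E n s u → Deriv Sig E n t u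
  | congr {k n : ℕ} {s s' : Term Sig k} {ts ts' : Fin k → Term Sig n} :
      Deriv Sig E k s s' → (∀ i, Deriv Sig E n (ts i) (ts' i)) →
      Deriv Sig E n (s.subst ts) (s'.subst ts')

/-- A Σ-algebra is a model of E iff every axiom holds in it. -/
def IsModel {Sig : ℕ → Type u} (E : ∀ n, Term Sig n → Term Sig n → Prop) {A : Type v}
    (ops : ∀ k, Sig k → (Fin k → A) → A) : Prop :=
  ∀ (n : ℕ) (t s : Term Sig n), E n t s → ∀ a : Fin n → A, interp ops t a = interp ops s a

/-- Abstract clones. -/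
structure Clone where
  T : ℕ → Type u
  p : ∀ n, Fin n → T n
  comp : ∀ {k n : ℕ}, T k → (Fin k → T n) → T n
  comp_p : ∀ {k n : ℕ} (j : Fin k) (θ : Fin k → T n), comp (p k j) θ = θ j
  p_comp : ∀ {n : ℕ} (θ : T n), comp θ (p n) = θ
  assoc : ∀ {l k n : ℕ} (ψ : T l) (φ : Fin l → T k) (θ : Fin k → T n),
    comp ψ (fun i => comp (φ i) θ) = comp (comp ψ φ) θ

/-- Clone homomorphisms. -/
def IsCloneHom (C : Clone.{u}) (D : Clone.{v}) (h : ∀ n, C.T n → D.T n) : Prop :=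
  (∀ (n : ℕ) (i : Fin n), h n (C.p n i) = D.p n i) ∧
  ∀ (k n : ℕ) (φ : C.T k) (θ : Fin k → C.T n),
    h n (C.comp φ θ) = D.comp (h k φ) (fun i => h n (θ i))

/-- The clone of finitary operations on a set. -/
def endClone (A : Type v) : Clone.{v} where
  T := fun n => (Fin n → A) → A
  p := fun _ i a => a i
  comp := fun g f a => g (fun i => f i a)
  comp_p := fun _ _ => rfl
  p_comp := fun _ => rfl
  assoc := fun _ _ _ => rfl

/-- The term clone. -/
def termClone (Sig : ℕ → Type u) : Clone.{u} where
  T := Term Sig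
  p := fun _ i => .var i
  comp := fun t θ => t.subst θ
  comp_p := fun _ _ => rfl
  p_comp := fun t => Term.subst_var t
  assoc := fun u s t => (Term.subst_assoc u s t).symm

/-- Derivable equality as a setoid on terms. -/
def derivSetoid (Sig : ℕ → Type u) (E : ∀ n, Term Sig n → Term Sig n → Prop) (n : ℕ) :
    Setoid (Term Sig n) :=
  ⟨Deriv Sig E n, ⟨fun t => Deriv.refl t, Deriv.symm, Deriv.trans⟩⟩

/-- Terms modulo derivable equality. -/
def TQ (Sig : ℕ → Type u) (E : ∀ n, Term Sig n → Term Sig n → Prop) (n : ℕ) : Type u :=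
  Quotient (derivSetoid Sig E n)

def mkQ (Sig : ℕ → Type u) (E : ∀ n, Term Sig n → Term Sig n → Prop) {n : ℕ}
    (t : Term Sig n) : TQ Sig E n :=
  Quotient.mk (derivSetoid Sig E n) t

noncomputable def quotComp {Sig : ℕ → Type u} {E : ∀ n, Term Sig n → Term Sig n → Prop}
    {k n : ℕ} (φ : TQ Sig E k) (θ : Fin k → TQ Sig E n) : TQ Sig E n :=
  Quotient.liftOn φ (fun t => mkQ Sig E (t.subst (fun i => (θ i).out)))
    (fun _ _ h => Quotient.sound (Deriv.congr h (fun _ => Deriv.refl _)))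

theorem quotComp_mk {Sig : ℕ → Type u} {E : ∀ n, Term Sig n → Term Sig n → Prop} {k n : ℕ}
    (φ : Term Sig k) (θ : Fin k → Term Sig n) :
    quotComp (mkQ Sig E φ) (fun i => mkQ Sig E (θ i)) = mkQ Sig E (φ.subst θ) :=
  Quotient.sound (Deriv.congr (Deriv.refl φ)
    (fun i => Quotient.exact (Quotient.out_eq (mkQ Sig E (θ i)))))

theorem quot_comp_p {Sig : ℕ → Type u} {E : ∀ n, Term Sig n → Term Sig n → Prop} {k n : ℕ}
    (j : Fin k) (θ : Fin k → TQ Sig E n) :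
    quotComp (mkQ Sig E (Term.var j)) θ = θ j :=
  Quotient.out_eq (θ j)

theorem quot_p_comp {Sig : ℕ → Type u} {E : ∀ n, Term Sig n → Term Sig n → Prop} {n : ℕ}
    (θ : TQ Sig E n) : quotComp θ (fun i => mkQ Sig E (Term.var i)) = θ := by
  induction θ using Quotient.inductionOn with
  | h t =>
    have h2 := quotComp_mk (E := E) t (fun i => Term.var i)
    rw [Term.subst_var] at h2
    exact h2

theorem quot_assoc {Sig : ℕ → Type u} {E : ∀ n, Term Sig n → Term Sig n → Prop}
    {l k n : ℕ} (ψ : TQ Sig E l) (φ : Fin l → TQ Sig E k) (θ : Fin k → TQ Sig E n) :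
    quotComp ψ (fun i => quotComp (φ i) θ) = quotComp (quotComp ψ φ) θ := by
  induction ψ using Quotient.inductionOn with
  | h u =>
    have key : ∀ i, Deriv Sig E n ((quotComp (φ i) θ).out)
        (((φ i).out).subst (fun j => (θ j).out)) := by
      intro i
      have h1 : quotComp (φ i) θ
          = mkQ Sig E (((φ i).out).subst (fun j => (θ j).out)) := by
        conv_lhs => rw [← Quotient.out_eq (φ i)]
        rfl
      exact Quotient.exact ((Quotient.out_eq (quotComp (φ i) θ)).trans h1)
    show mkQ Sig E (u.subst (fun i => (quotComp (φ i) θ).out))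
      = mkQ Sig E ((u.subst (fun i => (φ i).out)).subst (fun j => (θ j).out))
    refine Quotient.sound ?_
    rw [Term.subst_assoc]
    exact Deriv.congr (Deriv.refl u) key

/-- The quotient clone `T(Σ)/Ē`. -/
noncomputable def quotClone (Sig : ℕ → Type u)
    (E : ∀ n, Term Sig n → Term Sig n → Prop) : Clone.{u} where
  T := TQ Sig E
  p := fun _ i => mkQ Sig E (Term.var i)
  comp := quotComp
  comp_p := fun j θ => quot_comp_p j θ
  p_comp := fun θ => quot_p_comp θ
  assoc := fun ψ φ θ => quot_assoc ψ φ θ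

/-- The canonical evaluation of terms over (the underlying graded set of) a clone. -/
def Clone.eps (S : Clone.{u}) {n : ℕ} : Term S.T n → S.T n
  | .var i => S.p _ i
  | .op σ ts => S.comp σ (fun i => S.eps (ts i))

/-- **Completeness of equational logic.** If `t ≈ s` holds in every model of `⟨Σ, E⟩`,
then `t ≈ s` is derivable from `E`. -/
theorem completeness_of_equational_logic {Sig : ℕ → Type u}
    (E : ∀ n, Term Sig n → Term Sig n → Prop) {n : ℕ} (t s : Term Sig n)
    (h : ∀ (A : Type u) (ops : ∀ k, Sig k → (Fin k → A) → A), IsModel E ops →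
      ∀ a : Fin n → A, interp ops t a = interp ops s a) :
    Deriv Sig E n t s := by
  classical
  set A := TQ Sig E n with hA
  let ops : ∀ k, Sig k → (Fin k → A) → A :=
    fun k σ f => quotComp (mkQ Sig E (Term.op σ (fun i => Term.var i))) f
  have key : ∀ {m : ℕ} (u : Term Sig m) (a : Fin m → A),
      interp ops u a = quotComp (mkQ Sig E u) a := by
    intro m u
    induction u with
    | var i => intro a; exact (quot_comp_p i a).symm
    | op σ ts ih =>
      intro a
      have : interp ops (Term.op σ ts) a
          = quotComp (mkQ Sig E (Term.op σ (fun i => Term.var i)))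
              (fun j => quotComp (mkQ Sig E (ts j)) a) := by
        show ops _ σ (fun j => interp ops (ts j) a) = _
        congr 1
        funext j
        exact ih j a
      rw [this, quot_assoc, quotComp_mk]
      rfl
  have hmodel : IsModel E ops := by
    intro m t' s' he a
    rw [key, key]
    have : mkQ Sig E t' = mkQ Sig E s' := Quotient.sound (Deriv.ax he)
    rw [this]
  have := h A ops hmodel (fun i => mkQ Sig E (Term.var i))
  rw [key, key, quot_p_comp, quot_p_comp] at this
  exact Quotient.exact this
end

section
/- Equational logic is sound and complete with respect to clone-valued semantics: a Σ-equation t ≈_n s is derivable from E if and only if for every clone S and every graded-set morphism f : Σ → S whose extension g : T(Σ) → S identifies both sides of every axiom in E, we have g_n(t) = g_n(s). -/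
universe u v

/-- **Soundness and completeness with respect to clone-valued semantics.** A
Σ-equation `t ≈ s` is derivable from `E` iff every clone homomorphism
`g : T(Σ) → S` (extending a graded-set morphism `f : Σ → S`) which identifies both
sides of every axiom of `E` also identifies `t` and `s`. -/
theorem clone_valued_soundness_completeness {Sig : ℕ → Type u}
    (E : ∀ n, Term Sig n → Term Sig n → Prop) {n : ℕ} (t s : Term Sig n) :
    Deriv Sig E n t s ↔
      ∀ (S : Clone.{u}) (g : ∀ m, Term Sig m → S.T m),
        IsCloneHom (termClone Sig) S g →
        (∀ (m : ℕ) (t' s' : Term Sig m), E m t' s' → g m t' = g m s') →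
        g n t = g n s := by
  constructor
  · intro hd S g hg hE
    induction hd with
    | ax h => exact hE _ _ _ h
    | refl t => rfl
    | symm _ ih => exact ih.symm
    | trans _ _ ih1 ih2 => exact ih1.trans ih2
    | @congr k m s s' ts ts' _ _ ih ihs =>
      have h1 := hg.2 k m s ts
      have h2 := hg.2 k m s' ts'
      show g m ((termClone Sig).comp s ts) = g m ((termClone Sig).comp s' ts')
      rw [h1, h2, ih]
      congr 1
      funext i
      exact ihs i
  · intro h
    have := h (quotClone Sig E) (fun m u => mkQ Sig E u)
      ⟨fun _ _ => rfl, fun k m φ θ => (quotComp_mk φ θ).symm⟩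
      (fun m t' s' he => Quotient.sound (Deriv.ax he))
    exact Quotient.exact this
end

section
/- For the clone T^⟨Σ,E⟩ with the canonical morphism q ∘ η_Σ : Σ → T(Σ)/Ē, a Σ-equation t ≈_n s is satisfied by (T^⟨Σ,E⟩, q ∘ η_Σ) in the clone-valued semantics if and only if t ≈_n s is derivable from E. -/
universe u v

/-- The pair `(T^⟨Σ,E⟩, q ∘ η_Σ)` satisfies a Σ-equation `t ≈ s` in the clone-valued
semantics iff `t ≈ s` is derivable from `E`: for the clone-homomorphism extension `g`
of `q ∘ η_Σ`, `g t = g s` iff `⟨Σ,E⟩ ⊢ t ≈ s`. -/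
theorem term_clone_model_satisfies_iff_derivable {Sig : ℕ → Type u}
    (E : ∀ n, Term Sig n → Term Sig n → Prop) {n : ℕ} (t s : Term Sig n)
    (g : ∀ m, Term Sig m → TQ Sig E m)
    (hg : IsCloneHom (termClone Sig) (quotClone Sig E) g)
    (hgen : ∀ (m : ℕ) (σ : Sig m),
      g m (Term.op σ (fun i => Term.var i)) = mkQ Sig E (Term.op σ (fun i => Term.var i))) :
    (g n t = g n s ↔ Deriv Sig E n t s) := by
  have key : ∀ (m : ℕ) (u : Term Sig m), g m u = mkQ Sig E u := by
    intro m u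
    induction u with
    | var i => exact hg.1 m i
    | op σ ts ih =>
      have h1 : Term.op σ ts
          = (termClone Sig).comp (Term.op σ (fun i => Term.var i)) ts := rfl
      rw [h1, hg.2 _ m (Term.op σ (fun i => Term.var i)) ts]
      show quotComp _ _ = _
      simp only [ih, hgen]
      exact quotComp_mk (Term.op σ (fun i => Term.var i)) ts
  rw [key n t, key n s]
  exact ⟨fun h => Quotient.exact h, fun h => Quotient.sound h⟩
end
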